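/- arXiv:1001.4314 — 7 statements merged into one kernel-verified Lean document; each statement's English description precedes it below -/
import Mathlib

section
/- The Watatani index of a conditional expectation with a quasi-basis does not depend on the choice of quasi-basis and is a central element of the algebra: if E : A → P is a conditional expectation for an inclusion of unital C*-algebras P ⊆ A, and {(u_i, v_i)} and {(u'_j, v'_j)} are two quasi-bases for E, then ∑ u_i v_i = ∑ u'_j v'_j, and this element commutes with every element of A. -/
/-- A conditional expectation from a unital C*-algebra `A` onto a C*-subalgebra `P`:
a ℂ-linear, positive, star-preserving `P`-bimodule projection onto `P`. -/
structure IsCondExp {A : Type*} [NormedRing A] [StarRing A] [CStarRing A]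
    [NormedAlgebra ℂ A] [CompleteSpace A] [StarModule ℂ A] [PartialOrder A]
    [StarOrderedRing A] (P : StarSubalgebra ℂ A) (E : A → A) : Prop where
  map_add : ∀ x y : A, E (x + y) = E x + E y
  map_smul : ∀ (c : ℂ) (x : A), E (c • x) = c • E x
  mem : ∀ x : A, E x ∈ P
  fix : ∀ x ∈ P, E x = x
  bimod : ∀ p ∈ P, ∀ q ∈ P, ∀ x : A, E (p * x * q) = p * E x * q
  star_map : ∀ x : A, E (star x) = star (E x)
  pos : ∀ x : A, 0 ≤ E (star x * x)

/-- A quasi-basis `{(u i, v i)}` for a conditional expectation `E`: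
`a = ∑ i, u i * E (v i * a) = ∑ i, E (a * u i) * v i` for every `a`. -/
def IsQuasiBasis {A : Type*} [Ring A] (E : A → A) {n : ℕ} (u v : Fin n → A) : Prop :=
  ∀ a : A, (a = ∑ i, u i * E (v i * a)) ∧ (a = ∑ i, E (a * u i) * v i)

/-- The Watatani index `∑ i, u i * v i` of a conditional expectation with a
quasi-basis does not depend on the choice of the quasi-basis, and it is a central
element of `A`. -/
theorem watatani_index_well_defined_and_central
    {A : Type*} [NormedRing A] [StarRing A] [CStarRing A] [NormedAlgebra ℂ A]
    [CompleteSpace A] [StarModule ℂ A] [PartialOrder A] [StarOrderedRing A]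
    (P : StarSubalgebra ℂ A) (E : A → A) (hE : IsCondExp P E)
    {n m : ℕ} (u v : Fin n → A) (u' v' : Fin m → A)
    (hq : IsQuasiBasis E u v) (hq' : IsQuasiBasis E u' v') :
    (∑ i, u i * v i) = (∑ j, u' j * v' j) ∧
      ∀ a : A, Commute (∑ i, u i * v i) a := by
  have key : ∀ a : A, (∑ i, u i * v i) * a = a * (∑ j, u' j * v' j) := by
    intro a
    calc (∑ i, u i * v i) * a = ∑ i, u i * (v i * a) := by
          rw [Finset.sum_mul]; simp [mul_assoc]
      _ = ∑ i, u i * (∑ j, E (v i * a * u' j) * v' j) := by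
          refine Finset.sum_congr rfl fun i _ => ?_
          rw [← (hq' (v i * a)).2]
      _ = ∑ i, ∑ j, u i * E (v i * (a * u' j)) * v' j := by
          refine Finset.sum_congr rfl fun i _ => ?_
          rw [Finset.mul_sum]; simp [mul_assoc]
      _ = ∑ j, (∑ i, u i * E (v i * (a * u' j))) * v' j := by
          rw [Finset.sum_comm]; simp [Finset.sum_mul]
      _ = ∑ j, (a * u' j) * v' j := by
          refine Finset.sum_congr rfl fun j _ => ?_
          rw [← (hq (a * u' j)).1]
      _ = a * ∑ j, u' j * v' j := by rw [Finset.mul_sum]; simp [mul_assoc]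
  have heq : (∑ i, u i * v i) = (∑ j, u' j * v' j) := by
    have := key 1; simpa using this
  exact ⟨heq, fun a => by simpa [Commute, SemiconjBy, heq] using key a⟩
end

section
/- If a conditional expectation E : A → P on an inclusion of unital C*-algebras admits a quasi-basis (i.e. has finite Watatani index), then E is faithful: E(x*x) = 0 implies x = 0 for all x ∈ A. -/
/-- A conditional expectation admitting a quasi-basis (i.e. of finite
Watatani index) is faithful: `E (x* x) = 0` implies `x = 0`. -/
theorem condExp_faithful_of_quasiBasis
    {A : Type*} [NormedRing A] [StarRing A] [CStarRing A] [NormedAlgebra ℂ A]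
    [CompleteSpace A] [StarModule ℂ A] [PartialOrder A] [StarOrderedRing A]
    (P : StarSubalgebra ℂ A) (E : A → A) (hE : IsCondExp P E)
    {n : ℕ} (u v : Fin n → A) (hq : IsQuasiBasis E u v) :
    ∀ x : A, E (star x * x) = 0 → x = 0 := by
  letI : CStarAlgebra A := ⟨⟩
  intro x hx
  -- scaling positivity by a nonnegative real scalar
  have smul_nn : ∀ (r : ℝ), 0 ≤ r → ∀ {a : A}, 0 ≤ a → 0 ≤ (r : ℂ) • a := by
    intro r hr a ha
    have h := star_left_conjugate_nonneg ha ((Real.sqrt r : ℂ) • (1 : A))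
    simpa [star_smul, Complex.star_def, Complex.conj_ofReal, smul_mul_assoc,
      mul_smul_comm, smul_smul, ← Complex.ofReal_mul, Real.mul_self_sqrt hr] using h
  have key : ∀ y : A, E (star y * x) = 0 := by
    intro y
    set z := E (star y * x) with hz
    set k := E (star y * y) with hk
    have hk0 : 0 ≤ k := hE.pos y
    have hzs : E (star x * y) = star z := by
      rw [hz, ← hE.star_map]
      congr 1
      simp [star_mul]
    -- basic positivity inequality
    have base : ∀ c : ℂ,
        0 ≤ c • star z + (star c) • z + ((star c) * c) • k := by
      intro c
      have h := hE.pos (x + c • y)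
      have expand : star (x + c • y) * (x + c • y)
          = star x * x + c • (star x * y) + (star c) • (star y * x)
            + ((star c) * c) • (star y * y) := by
        simp only [star_add, star_smul, add_mul, mul_add, smul_add, smul_mul_assoc,
          mul_smul_comm, smul_smul]
        module
      rw [expand, hE.map_add, hE.map_add, hE.map_add, hE.map_smul, hE.map_smul,
        hE.map_smul, hx, hzs, ← hz, ← hk, zero_add] at h
      exact h
    -- tendsto fact
    have tend : Filter.Tendsto (fun t : ℝ => ((t : ℂ) • k : A)) (nhdsWithin 0 (Set.Ioi 0))
        (nhds 0) := by
      have hc : Continuous fun t : ℝ => ((t : ℂ) • k : A) :=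
        (Complex.continuous_ofReal).smul continuous_const
      simpa using (hc.tendsto 0).mono_left nhdsWithin_le_nhds
    -- generic limit argument
    have vanish : ∀ w : A, (∀ t : ℝ, 0 < t → 0 ≤ w + (t : ℂ) • k) →
        (∀ t : ℝ, 0 < t → w ≤ (t : ℂ) • k) → w = 0 := by
      intro w h1 h2
      have hle : w ≤ 0 :=
        ge_of_tendsto tend (Filter.eventually_of_mem self_mem_nhdsWithin
          (fun t ht => h2 t ht))
      have hge : 0 ≤ w := by
        have tend' : Filter.Tendsto (fun t : ℝ => (-((t : ℂ) • k) : A))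
            (nhdsWithin 0 (Set.Ioi 0)) (nhds 0) := by
          simpa using tend.neg
        refine le_of_tendsto tend' (Filter.eventually_of_mem self_mem_nhdsWithin
          (fun t ht => ?_))
        exact neg_le_iff_add_nonneg.mpr (h1 t ht)
      exact le_antisymm hle hge
    -- scaled inequalities imply vanishing
    have scale : ∀ w : A, (∀ t : ℝ, t ≠ 0 →
          0 ≤ (t : ℂ) • w + ((t : ℂ) * (t : ℂ)) • k) → w = 0 := by
      intro w hw
      refine vanish w (fun t ht => ?_) (fun t ht => ?_)
      · have h := smul_nn t⁻¹ (by positivity) (hw t ht.ne')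
        rw [smul_add, smul_smul, smul_smul, ← Complex.ofReal_mul,
          inv_mul_cancel₀ ht.ne', Complex.ofReal_one, one_smul] at h
        have he : ((t⁻¹ : ℝ) : ℂ) * ((t : ℂ) * (t : ℂ)) = (t : ℂ) := by
          push_cast
          field_simp
        rwa [he] at h
      · have h := smul_nn t⁻¹ (by positivity) (hw (-t) (by simpa using ht.ne'))
        rw [smul_add, smul_smul, smul_smul] at h
        have htc : (t : ℂ) ≠ 0 := by exact_mod_cast ht.ne'
        have he1 : ((t⁻¹ : ℝ) : ℂ) * ((-t : ℝ) : ℂ) = -1 := by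
          push_cast
          field_simp
        have he2 : ((t⁻¹ : ℝ) : ℂ) * (((-t : ℝ) : ℂ) * ((-t : ℝ) : ℂ)) = (t : ℂ) := by
          push_cast
          field_simp
        rw [he1, he2, neg_one_smul, neg_add_eq_sub] at h
        exact sub_nonneg.mp h
    -- first self-adjoint part vanishes
    have h1 : star z + z = 0 := by
      refine scale _ (fun t ht => ?_)
      have h := base (t : ℂ)
      rw [show star ((t : ℂ)) = ((t : ℂ)) by simp [Complex.star_def, Complex.conj_ofReal]] at h
      rw [smul_add]
      exact h
    -- second self-adjoint part vanishes
    have h2 : Complex.I • star z - Complex.I • z = 0 := by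
      refine scale _ (fun t ht => ?_)
      have h := base ((t : ℂ) * Complex.I)
      have hstar : star ((t : ℂ) * Complex.I) = -((t : ℂ) * Complex.I) := by
        simp [Complex.star_def, Complex.conj_ofReal]
      rw [hstar] at h
      have he : (-((t : ℂ) * Complex.I)) * ((t : ℂ) * Complex.I) = (t : ℂ) * (t : ℂ) := by
        rw [show (-((t : ℂ) * Complex.I)) * ((t : ℂ) * Complex.I)
            = -((t : ℂ) * (t : ℂ) * (Complex.I * Complex.I)) by ring, Complex.I_mul_I]
        ring
      rw [he] at h
      have hrw : ((t : ℂ) * Complex.I) • star z + (-((t : ℂ) * Complex.I)) • z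
            + ((t : ℂ) * (t : ℂ)) • k
          = (t : ℂ) • (Complex.I • star z - Complex.I • z) + ((t : ℂ) * (t : ℂ)) • k := by
        rw [smul_sub, smul_smul, smul_smul, neg_smul, sub_eq_add_neg]
      rwa [hrw] at h
    -- conclude z = 0
    have hsz : star z = z := by
      have hI : Complex.I • (star z - z) = 0 := by
        rw [smul_sub]; exact h2
      rcases smul_eq_zero.mp hI with h | h
      · exact absurd h Complex.I_ne_zero
      · exact sub_eq_zero.mp h
    have h2z : (2 : ℂ) • z = 0 := by
      rw [two_smul]
      rw [hsz] at h1
      exact h1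
    rcases smul_eq_zero.mp h2z with h | h
    · exact absurd h two_ne_zero
    · exact h
  have hvx : ∀ i, E (v i * x) = 0 := fun i => by simpa using key (star (v i))
  have hx1 := (hq x).1
  rw [hx1]
  simp [hvx]
end

section
/- Let {(u_i, v_i)} be a quasi-basis for a conditional expectation E : A → P, with A acting faithfully on a Hilbert space H. Then the map E^{-1} : P' ∩ B(H) → B(H) defined by E^{-1}(x) = ∑_i u_i x v_i takes values in A' ∩ B(H); that is, for every x commuting with all of P and every a ∈ A, (∑_i u_i x v_i) a = a (∑_i u_i x v_i). -/
/-! The right quasi-basis expansion `v i * a = ∑ j, E (v i * a * u j) * v j` moves `a` to the right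
of the coefficients `E (⋯)`, which commute with `x` because they lie in `P`; the left expansion
`∑ i, u i * E (v i * (a * u j)) = a * u j` then reassembles `a` on the left. -/

section QuasiBasis

variable {A B F : Type*} [Ring A] [Ring B] [FunLike F A B] [RingHomClass F A B]
  {E : A → A} {n : ℕ} {u v : Fin n → A}

theorem IsQuasiBasis.mul_map_eq_sum (hq : IsQuasiBasis E u v) (f : F) {x : B}
    (hx : ∀ y, Commute x (f (E y))) (b : A) :
    x * f b = ∑ j, f (E (b * u j)) * x * f (v j) := by
  conv_lhs => rw [(hq b).2, map_sum, Finset.mul_sum]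
  refine Finset.sum_congr rfl fun j _ => ?_
  rw [map_mul, ← mul_assoc, (hx _).eq]

theorem IsQuasiBasis.commute_sum_map_mul_mul_map (hq : IsQuasiBasis E u v) (f : F) {x : B}
    (hx : ∀ y, Commute x (f (E y))) (a : A) :
    Commute (∑ i, f (u i) * x * f (v i)) (f a) := by
  calc (∑ i, f (u i) * x * f (v i)) * f a
      = ∑ i, f (u i) * (x * f (v i * a)) := by
        simp only [Finset.sum_mul, map_mul, mul_assoc]
    _ = ∑ i, ∑ j, f (u i) * f (E (v i * a * u j)) * x * f (v j) := by
        refine Finset.sum_congr rfl fun i _ => ?_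
        rw [hq.mul_map_eq_sum f hx, Finset.mul_sum]
        simp only [mul_assoc]
    _ = ∑ j, f (∑ i, u i * E (v i * (a * u j))) * x * f (v j) := by
        rw [Finset.sum_comm]
        simp only [map_sum, map_mul, Finset.sum_mul, mul_assoc]
    _ = f a * ∑ j, f (u j) * x * f (v j) := by
        simp only [← (hq _).1, Finset.mul_sum, map_mul, mul_assoc]

end QuasiBasis

theorem quasiBasis_inverse_map_into_relative_commutant_general
    {A : Type*} [NormedRing A] [StarRing A] [CStarRing A] [NormedAlgebra ℂ A]
    [CompleteSpace A] [StarModule ℂ A] [PartialOrder A] [StarOrderedRing A]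
    {H : Type*} [NormedAddCommGroup H] [InnerProductSpace ℂ H] [CompleteSpace H]
    (P : StarSubalgebra ℂ A) (E : A → A) (hE : IsCondExp P E)
    {n : ℕ} (u v : Fin n → A) (hq : IsQuasiBasis E u v)
    (π : A →⋆ₐ[ℂ] (H →L[ℂ] H))
    (x : H →L[ℂ] H) (hx : ∀ p ∈ P, Commute x (π p)) :
    ∀ a : A, Commute (∑ i, π (u i) * x * π (v i)) (π a) :=
  hq.commute_sum_map_mul_mul_map π fun y => hx _ (hE.mem y)

/-- if `A` acts faithfully on a Hilbert space `H` via `π` and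
`{(u i, v i)}` is a quasi-basis for `E : A → P`, then for every operator `x`
commuting with (the image of) `P`, the operator `E⁻¹(x) = ∑ i, π (u i) * x * π (v i)`
commutes with (the image of) `A`; i.e. `E⁻¹` maps `P' ∩ B(H)` into `A' ∩ B(H)`. -/
theorem quasiBasis_inverse_map_into_relative_commutant
    {A : Type*} [NormedRing A] [StarRing A] [CStarRing A] [NormedAlgebra ℂ A]
    [CompleteSpace A] [StarModule ℂ A] [PartialOrder A] [StarOrderedRing A]
    {H : Type*} [NormedAddCommGroup H] [InnerProductSpace ℂ H] [CompleteSpace H]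
    (P : StarSubalgebra ℂ A) (E : A → A) (hE : IsCondExp P E)
    {n : ℕ} (u v : Fin n → A) (hq : IsQuasiBasis E u v)
    (π : A →⋆ₐ[ℂ] (H →L[ℂ] H)) (hπ : Function.Injective π)
    (x : H →L[ℂ] H) (hx : ∀ p ∈ P, Commute x (π p)) :
    ∀ a : A, Commute (∑ i, π (u i) * x * π (v i)) (π a) :=
  quasiBasis_inverse_map_into_relative_commutant_general P E hE u v hq π x hx
end

section
/- Let E : A → P be a conditional expectation of finite index, and suppose e ∈ A is a projection with E(e) = (Index E)^{-1}. Then e e_P e = (Index E)^{-1} e in the basic construction, where e_P is the Jones projection of E. -/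
/-!
With `I = (Index E)⁻¹` central and `f = e e_P e`, the relation `e_P e e_P = E(e) e_P = I e_P`
gives `f² = I f`, and `Ê(f) = I e`. Hence `x = f - I e` is self-adjoint with `x² = -I x` and
`Ê(x) = 0`, so `Ê(x* x) = -I Ê(x) = 0` and faithfulness of `Ê` forces `x = 0`.
-/

/-- A finite-index inclusion `P ⊆ A` of unital C*-algebras together with its
C*-basic construction, all realized inside one ambient C*-algebra `B = C*⟨A, e_P⟩`:
`E : A → P` is a conditional expectation of finite Watatani index `ind`
(a central, positive, invertible element, with inverse `indInv`), `eP` is the Jones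
projection (`e_P a e_P = E(a) e_P`, `B` is the linear span of `A e_P A`), and
`Ehat` is the (faithful) dual conditional expectation `Ê : B → A`,
`Ê(x e_P y) = (Index E)⁻¹ x y`. -/
structure WatataniSetup (B : Type*) [NormedRing B] [StarRing B] [CStarRing B]
    [NormedAlgebra ℂ B] [CompleteSpace B] [StarModule ℂ B] [PartialOrder B]
    [StarOrderedRing B] where
  A : StarSubalgebra ℂ B
  P : StarSubalgebra ℂ B
  le : P ≤ A
  E : B → B
  eP : B
  Ehat : B → B
  ind : B
  indInv : B
  ind_mem : ind ∈ P
  ind_central : ∀ b : B, Commute ind b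
  ind_pos : 0 ≤ ind
  ind_mul_inv : ind * indInv = 1
  inv_mul_ind : indInv * ind = 1
  -- `E` is a conditional expectation from `A` onto `P`
  E_add : ∀ x y : B, E (x + y) = E x + E y
  E_smul : ∀ (c : ℂ) (x : B), E (c • x) = c • E x
  E_mem : ∀ x ∈ A, E x ∈ P
  E_fix : ∀ x ∈ P, E x = x
  E_bimod : ∀ p ∈ P, ∀ q ∈ P, ∀ x : B, E (p * x * q) = p * E x * q
  E_star : ∀ x : B, E (star x) = star (E x)
  E_pos : ∀ x : B, 0 ≤ E (star x * x)
  E_faithful : ∀ x ∈ A, E (star x * x) = 0 → x = 0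
  -- the Jones projection
  eP_idem : eP * eP = eP
  eP_star : star eP = eP
  eP_conj : ∀ a ∈ A, eP * a * eP = E a * eP
  eP_comm : ∀ p ∈ P, Commute eP p
  eP_inj : ∀ p ∈ P, p * eP = 0 → p = 0
  -- `B` is the basic construction: the linear span of `A e_P A`
  span : ∀ z : B, ∃ (n : ℕ) (x y : Fin n → B),
    (∀ i, x i ∈ A) ∧ (∀ i, y i ∈ A) ∧ z = ∑ i, x i * eP * y i
  -- the dual conditional expectation `Ê : B → A`
  Ehat_add : ∀ x y : B, Ehat (x + y) = Ehat x + Ehat y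
  Ehat_smul : ∀ (c : ℂ) (x : B), Ehat (c • x) = c • Ehat x
  Ehat_mem : ∀ x : B, Ehat x ∈ A
  Ehat_fix : ∀ x ∈ A, Ehat x = x
  Ehat_bimod : ∀ p ∈ A, ∀ q ∈ A, ∀ x : B, Ehat (p * x * q) = p * Ehat x * q
  Ehat_star : ∀ x : B, Ehat (star x) = star (Ehat x)
  Ehat_pos : ∀ x : B, 0 ≤ Ehat (star x * x)
  Ehat_faithful : ∀ x : B, Ehat (star x * x) = 0 → x = 0
  Ehat_eP : ∀ x ∈ A, ∀ y ∈ A, Ehat (x * eP * y) = indInv * (x * y)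

theorem sub_mul_self_of_mul_self_eq {R : Type*} [Ring R] {e f c : R} (he : e * e = e)
    (hef : e * f = f) (hfe : f * e = f) (hff : f * f = c * f) (hce : Commute c e)
    (hcf : Commute c f) :
    (f - c * e) * (f - c * e) = -c * (f - c * e) := by
  have hfc : f * (c * e) = c * f := by
    rw [← mul_assoc, ← hcf.eq, mul_assoc, hfe]
  have hcc : c * e * (c * e) = c * (c * e) := by
    rw [mul_assoc, ← mul_assoc e, ← hce.eq, mul_assoc, he]
  simp only [sub_mul, mul_sub, hff, hfc, hcc, mul_assoc c e f, hef, neg_mul]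
  abel

namespace WatataniSetup

variable {B : Type*} [NormedRing B] [StarRing B] [CStarRing B] [NormedAlgebra ℂ B]
  [CompleteSpace B] [StarModule ℂ B] [PartialOrder B] [StarOrderedRing B] (S : WatataniSetup B)

theorem commute_indInv (b : B) : Commute S.indInv b :=
  Commute.units_inv_left (u := ⟨S.ind, S.indInv, S.ind_mul_inv, S.inv_mul_ind⟩) (S.ind_central b)

theorem isSelfAdjoint_indInv : IsSelfAdjoint S.indInv := by
  have hind : star S.ind = S.ind := IsSelfAdjoint.of_nonneg S.ind_pos
  have h : star S.indInv * S.ind = 1 := by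
    simpa [star_mul, hind] using congrArg star S.ind_mul_inv
  exact left_inv_eq_right_inv h S.ind_mul_inv

theorem Ehat_eP_eq : S.Ehat S.eP = S.indInv := by
  simpa using S.Ehat_eP 1 S.A.one_mem 1 S.A.one_mem

theorem indInv_mem : S.indInv ∈ S.A :=
  S.Ehat_eP_eq ▸ S.Ehat_mem S.eP

theorem Ehat_neg (x : B) : S.Ehat (-x) = -S.Ehat x := by
  simpa using S.Ehat_smul (-1) x

theorem Ehat_sub (x y : B) : S.Ehat (x - y) = S.Ehat x - S.Ehat y := by
  rw [sub_eq_add_neg, S.Ehat_add, S.Ehat_neg, sub_eq_add_neg]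

theorem Ehat_mul_left {a : B} (ha : a ∈ S.A) (x : B) : S.Ehat (a * x) = a * S.Ehat x := by
  simpa using S.Ehat_bimod a ha 1 S.A.one_mem x

theorem eq_zero_of_Ehat_eq_zero {x a : B} (hx : IsSelfAdjoint x) (ha : a ∈ S.A)
    (hxx : x * x = a * x) (h0 : S.Ehat x = 0) : x = 0 :=
  S.Ehat_faithful x <| by rw [hx.star_eq, hxx, S.Ehat_mul_left ha, h0, mul_zero]

theorem jones_conj_mul_self {e : B} (he : e ∈ S.A) (he_idem : e * e = e)
    (hEe : S.E e = S.indInv) :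
    e * S.eP * e * (e * S.eP * e) = S.indInv * (e * S.eP * e) := by
  calc e * S.eP * e * (e * S.eP * e) = e * (S.eP * (e * e) * S.eP) * e := by noncomm_ring
    _ = e * S.indInv * S.eP * e := by rw [he_idem, S.eP_conj e he, hEe]; noncomm_ring
    _ = S.indInv * (e * S.eP * e) := by rw [← (S.commute_indInv e).eq]; noncomm_ring

end WatataniSetup

/-- if `e ∈ A` is a projection with `E(e) = (Index E)⁻¹`, then
`e e_P e = (Index E)⁻¹ e` in the basic construction. -/
theorem proj_jones_proj_conj {B : Type*} [NormedRing B] [StarRing B] [CStarRing B]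
    [NormedAlgebra ℂ B] [CompleteSpace B] [StarModule ℂ B] [PartialOrder B]
    [StarOrderedRing B] (S : WatataniSetup B)
    (e : B) (he : e ∈ S.A) (he_idem : e * e = e) (he_star : star e = e)
    (hEe : S.E e = S.indInv) :
    e * S.eP * e = S.indInv * e := by
  have hsa : IsSelfAdjoint (e * S.eP * e - S.indInv * e) := by
    simp only [IsSelfAdjoint, star_sub, star_mul, he_star, S.eP_star,
      S.isSelfAdjoint_indInv.star_eq, (S.commute_indInv e).eq, mul_assoc]
  have hsq := sub_mul_self_of_mul_self_eq he_idem
    (by rw [← mul_assoc, ← mul_assoc, he_idem]) (by rw [mul_assoc, he_idem])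
    (S.jones_conj_mul_self he he_idem hEe) (S.commute_indInv e) (S.commute_indInv _)
  have hEhat : S.Ehat (e * S.eP * e - S.indInv * e) = 0 := by
    rw [S.Ehat_sub, S.Ehat_eP e he e he, he_idem, S.Ehat_fix _ (S.A.mul_mem S.indInv_mem he),
      sub_self]
  exact sub_eq_zero.mp <| S.eq_zero_of_Ehat_eq_zero hsa (neg_mem S.indInv_mem) hsq hEhat
end

section
/- Let E : A → P be a conditional expectation of finite index and let e ∈ A be a projection with E(e) = (Index E)^{-1}. Then for every a ∈ A, a e = (Index E) E(a e) e; in particular A e = P e and e A = e P. -/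
/-- if `e ∈ A` is a projection with `E(e) = (Index E)⁻¹`, then for
every `a ∈ A`, `a e = (Index E) E(a e) e`; in particular `A e = P e` and
`e A = e P`. -/
theorem projection_compression_identity {B : Type*} [NormedRing B] [StarRing B] [CStarRing B]
    [NormedAlgebra ℂ B] [CompleteSpace B] [StarModule ℂ B] [PartialOrder B]
    [StarOrderedRing B] (S : WatataniSetup B)
    (e : B) (he : e ∈ S.A) (he_idem : e * e = e) (he_star : star e = e)
    (hEe : S.E e = S.indInv) :
    (∀ a ∈ S.A, a * e = (S.ind * S.E (a * e)) * e) ∧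
    (∀ a ∈ S.A, ∃ p ∈ S.P, a * e = p * e) ∧
    (∀ a ∈ S.A, ∃ p ∈ S.P, e * a = e * p) := by

  -- abbreviations
  have hpull : ∀ x y : B, x * (S.ind * y) = S.ind * (x * y) := by
    intro x y
    rw [← mul_assoc, ← (S.ind_central x).eq, mul_assoc]
  have hinvc : ∀ b : B, S.indInv * b = b * S.indInv := by
    intro b
    calc S.indInv * b = S.indInv * b * (S.ind * S.indInv) := by
          rw [S.ind_mul_inv, mul_one]
      _ = S.indInv * (b * S.ind) * S.indInv := by simp only [mul_assoc]
      _ = S.indInv * (S.ind * b) * S.indInv := by rw [← (S.ind_central b).eq]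
      _ = (S.indInv * S.ind) * b * S.indInv := by simp only [mul_assoc]
      _ = b * S.indInv := by rw [S.inv_mul_ind, one_mul]
  have hinvpull : ∀ x y : B, x * (S.indInv * y) = S.indInv * (x * y) := by
    intro x y
    rw [← mul_assoc, ← hinvc x, mul_assoc]
  have hE0 : S.E 0 = 0 := by
    have h := S.E_smul 0 0
    simpa using h
  have hEh0 : S.Ehat 0 = 0 := by
    have h := S.Ehat_smul 0 0
    simpa using h
  have hEsub : ∀ x y : B, S.E (x - y) = S.E x - S.E y := by
    intro x y
    have h1 : S.E (-y) = -S.E y := by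
      have h := S.E_smul (-1) y
      simpa using h
    rw [sub_eq_add_neg, S.E_add, h1, sub_eq_add_neg]
  have hEhsub : ∀ x y : B, S.Ehat (x - y) = S.Ehat x - S.Ehat y := by
    intro x y
    have h1 : S.Ehat (-y) = -S.Ehat y := by
      have h := S.Ehat_smul (-1) y
      simpa using h
    rw [sub_eq_add_neg, S.Ehat_add, h1, sub_eq_add_neg]
  have hinds : star S.ind = S.ind := (IsSelfAdjoint.of_nonneg S.ind_pos).star_eq
  -- the Jones-type relation for e
  have hePeeP : S.eP * e * S.eP = S.indInv * S.eP := by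
    rw [S.eP_conj e he, hEe]
  set X := e * S.eP * e with hX_def
  have hXs : star X = X := by
    simp only [hX_def, star_mul, he_star, S.eP_star, mul_assoc]
  have hXX : X * X = S.indInv * X := by
    calc X * X = e * (S.eP * (e * e) * S.eP) * e := by
          simp only [hX_def, mul_assoc]
      _ = e * (S.eP * e * S.eP) * e := by rw [he_idem]
      _ = e * (S.indInv * S.eP) * e := by rw [hePeeP]
      _ = S.indInv * X := by
          rw [hinvpull e S.eP, hX_def, mul_assoc, mul_assoc]
  have hXe : X * e = X := by
    calc X * e = e * S.eP * (e * e) := by rw [hX_def, mul_assoc]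
      _ = X := by rw [he_idem, hX_def]
  have heX : e * X = X := by
    calc e * X = e * e * S.eP * e := by rw [hX_def, ← mul_assoc, ← mul_assoc]
      _ = X := by rw [he_idem, hX_def]
  -- z' := ind * X - e is self-adjoint with Ehat (z'*z') = 0, so ind * X = e
  set z := S.ind * X - e with hz_def
  have hzs : star z = z := by
    rw [hz_def, star_sub, star_mul, hXs, hinds, he_star, ← (S.ind_central X).eq]
  have P1 : (S.ind * X) * (S.ind * X) = S.ind * X := by
    calc (S.ind * X) * (S.ind * X) = S.ind * (X * (S.ind * X)) := by rw [mul_assoc]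
      _ = S.ind * (S.ind * (X * X)) := by rw [hpull X X]
      _ = S.ind * (S.ind * (S.indInv * X)) := by rw [hXX]
      _ = S.ind * ((S.ind * S.indInv) * X) := by rw [mul_assoc]
      _ = S.ind * X := by rw [S.ind_mul_inv, one_mul]
  have P2 : (S.ind * X) * e = S.ind * X := by rw [mul_assoc, hXe]
  have P3 : e * (S.ind * X) = S.ind * X := by rw [hpull e X, heX]
  have hzz : z * z = e - S.ind * X := by
    rw [hz_def, sub_mul, mul_sub, mul_sub, P1, P2, P3, he_idem]
    abel
  have hEhX : S.Ehat (S.ind * X) = e := by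
    have hassoc : S.ind * X = (S.ind * e) * S.eP * e := by
      rw [hX_def, ← mul_assoc, ← mul_assoc]
    rw [hassoc, S.Ehat_eP (S.ind * e) (mul_mem (S.le S.ind_mem) he) e he,
      mul_assoc, he_idem, ← mul_assoc, S.inv_mul_ind, one_mul]
  have hz0 : z = 0 := by
    apply S.Ehat_faithful
    rw [hzs, hzz, hEhsub, S.Ehat_fix e he, hEhX, sub_self]
  have hkey : S.ind * X = e := by
    have h := sub_eq_zero.mp hz0
    exact h
  -- main statement
  have main : ∀ a ∈ S.A, a * e = (S.ind * S.E (a * e)) * e := by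
    intro a ha
    set q := S.ind * S.E (a * e) with hq_def
    have hae : a * e ∈ S.A := mul_mem ha he
    have hEaeP : S.E (a * e) ∈ S.P := S.E_mem _ hae
    have hqP : q ∈ S.P := mul_mem S.ind_mem hEaeP
    have hqA : q ∈ S.A := S.le hqP
    set c := a - q with hc_def
    have hcA : c ∈ S.A := sub_mem ha hqA
    have hceA : c * e ∈ S.A := mul_mem hcA he
    -- E (c * e) = 0
    have hEqe : S.E (q * e) = S.E (a * e) := by
      have h1 : q * e = q * e * 1 := by rw [mul_one]
      rw [h1, S.E_bimod q hqP 1 (one_mem S.P) e, hEe, mul_one, hq_def, mul_assoc,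
        ← hinvc (S.E (a * e)), ← mul_assoc, S.ind_mul_inv, one_mul]
    have hEce : S.E (c * e) = 0 := by
      rw [hc_def, sub_mul, hEsub, hEqe, sub_self]
    -- eP * (c * e) = 0
    have hconj : S.eP * (c * e) * S.eP = 0 := by
      rw [S.eP_conj (c * e) hceA, hEce, zero_mul]
    have hm : S.eP * (c * e) = 0 := by
      calc S.eP * (c * e) = S.eP * (c * (S.ind * X)) := by rw [hkey]
        _ = S.eP * (S.ind * (c * X)) := by rw [hpull c X]
        _ = S.ind * (S.eP * (c * X)) := by rw [hpull S.eP (c * X)]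
        _ = S.ind * (S.eP * (c * e) * S.eP * e) := by
            rw [hX_def]
            simp only [mul_assoc]
        _ = S.ind * (0 * e) := by rw [hconj]
        _ = 0 := by rw [zero_mul, mul_zero]
    -- deduce c * e = 0 via faithfulness
    have hEhm : S.indInv * ((e * star c) * (c * e)) = 0 := by
      have h1 := S.Ehat_eP (e * star c) (mul_mem he (star_mem hcA)) (c * e) hceA
      have h2 : (e * star c) * S.eP * (c * e) = 0 := by
        rw [mul_assoc, hm, mul_zero]
      rw [h2, hEh0] at h1
      exact h1.symm
    have h7 : (e * star c) * (c * e) = 0 := by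
      calc (e * star c) * (c * e)
          = (S.ind * S.indInv) * ((e * star c) * (c * e)) := by rw [S.ind_mul_inv, one_mul]
        _ = S.ind * (S.indInv * ((e * star c) * (c * e))) := by rw [mul_assoc]
        _ = 0 := by rw [hEhm, mul_zero]
    have hce0 : c * e = 0 := by
      apply S.E_faithful (c * e) hceA
      rw [star_mul, he_star, h7, hE0]
    have : a * e - q * e = 0 := by
      rw [← sub_mul, ← hc_def]
      exact hce0
    exact (sub_eq_zero.mp this)
  refine ⟨main, ?_, ?_⟩
  · intro a ha
    exact ⟨S.ind * S.E (a * e), mul_mem S.ind_mem (S.E_mem _ (mul_mem ha he)), main a ha⟩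
  · intro a ha
    have h := main (star a) (star_mem ha)
    have h2 := congrArg star h
    rw [star_mul, star_mul, he_star, star_star] at h2
    exact ⟨star (S.ind * S.E (star a * e)),
      star_mem (mul_mem S.ind_mem (S.E_mem _ (mul_mem (star_mem ha) he))), h2⟩
end

section
/- Let α be an action of a finite group G on a unital C*-algebra A and E(x) = (1/|G|) ∑_{g∈G} α_g(x) the canonical conditional expectation onto the fixed point algebra P = A^α. Then α has the Rohlin property if and only if there exists a projection e ∈ A_∞ with E^∞(e) = (1/|G|)·1, where E^∞ : A^∞ → P^∞ is the induced expectation. -/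
/-- A sequence `(a n)` in a normed space is bounded. -/
def IsBddSeq {A : Type*} [Norm A] (a : ℕ → A) : Prop := ∃ C : ℝ, ∀ n, ‖a n‖ ≤ C

/-- Data exhibiting the algebra `Ainf` as the quotient `A^∞ = ℓ^∞(ℕ, A)/c₀(A)` of
bounded sequences in `A` modulo null sequences; `q` is the quotient map (its values
on unbounded sequences are irrelevant). -/
structure SeqAlg (A : Type*) [NormedRing A] [StarRing A] [NormedAlgebra ℂ A]
    (Ainf : Type*) [Ring Ainf] [StarRing Ainf] [Algebra ℂ Ainf] where
  q : (ℕ → A) → Ainf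
  surj : ∀ z : Ainf, ∃ a : ℕ → A, IsBddSeq a ∧ q a = z
  q_add : ∀ a b : ℕ → A, IsBddSeq a → IsBddSeq b → q (a + b) = q a + q b
  q_mul : ∀ a b : ℕ → A, IsBddSeq a → IsBddSeq b → q (a * b) = q a * q b
  q_smul : ∀ (c : ℂ) (a : ℕ → A), IsBddSeq a → q (c • a) = c • q a
  q_star : ∀ a : ℕ → A, IsBddSeq a → q (star a) = star (q a)
  q_one : q 1 = 1
  q_eq_zero_iff : ∀ a : ℕ → A, IsBddSeq a →
    (q a = 0 ↔ Filter.Tendsto (fun n => ‖a n‖) Filter.atTop (nhds 0))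

/-- The canonical embedding of `A` into `Ainf` as (classes of) constant sequences. -/
def SeqAlg.incl {A : Type*} [NormedRing A] [StarRing A] [NormedAlgebra ℂ A]
    {Ainf : Type*} [Ring Ainf] [StarRing Ainf] [Algebra ℂ Ainf]
    (S : SeqAlg A Ainf) (x : A) : Ainf := S.q fun _ => x

/-! The Rohlin projections are the translates `e_g = (α_g)_∞(e_1)` of the single projection
`e_1`, and `E^∞ = |G|⁻¹ ∑_g (α_g)_∞`. So a Rohlin tower gives `E^∞(e_1) = |G|⁻¹ • 1`; conversely,
if `E^∞(e) = |G|⁻¹ • 1` the translates of `e` sum to `1`, and they are projections in `A_∞`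
because each `(α_g)_∞` is a `*`-endomorphism of `A^∞` mapping `A` onto `A`. The only analytic
input is that `*`-homomorphisms of C*-algebras are contractive, so `α_g` preserves bounded
sequences. -/

section IsBddSeq

variable {A : Type*}

theorem isBddSeq_const [Norm A] (x : A) : IsBddSeq fun _ : ℕ => x :=
  ⟨‖x‖, fun _ => le_rfl⟩

theorem IsBddSeq.comp_of_norm_le {B : Type*} [Norm A] [Norm B] {f : A → B}
    (hf : ∀ x, ‖f x‖ ≤ ‖x‖) {a : ℕ → A} (ha : IsBddSeq a) : IsBddSeq (f ∘ a) :=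
  let ⟨C, hC⟩ := ha
  ⟨C, fun n => (hf (a n)).trans (hC n)⟩

theorem IsBddSeq.add [SeminormedAddCommGroup A] {a b : ℕ → A} (ha : IsBddSeq a)
    (hb : IsBddSeq b) : IsBddSeq (a + b) :=
  let ⟨C, hC⟩ := ha
  let ⟨D, hD⟩ := hb
  ⟨C + D, fun n => (norm_add_le _ _).trans (add_le_add (hC n) (hD n))⟩

theorem IsBddSeq.sum [SeminormedAddCommGroup A] {ι : Type*} (s : Finset ι) {a : ι → ℕ → A}
    (ha : ∀ i ∈ s, IsBddSeq (a i)) : IsBddSeq (∑ i ∈ s, a i) := by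
  classical
  induction s using Finset.induction_on with
  | empty => exact isBddSeq_const (0 : A)
  | insert i s hi ih =>
    rw [Finset.sum_insert hi]
    exact (ha i (s.mem_insert_self i)).add (ih fun j hj => ha j (Finset.mem_insert_of_mem hj))

theorem IsBddSeq.mul [SeminormedRing A] {a b : ℕ → A} (ha : IsBddSeq a) (hb : IsBddSeq b) :
    IsBddSeq (a * b) := by
  obtain ⟨C, hC⟩ := ha
  obtain ⟨D, hD⟩ := hb
  refine ⟨max C 0 * max D 0, fun n => (norm_mul_le _ _).trans ?_⟩
  exact mul_le_mul ((hC n).trans (le_max_left _ _)) ((hD n).trans (le_max_left _ _))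
    (norm_nonneg _) (le_max_right _ _)

theorem IsBddSeq.star [SeminormedAddCommGroup A] [StarAddMonoid A] [NormedStarGroup A]
    {a : ℕ → A} (ha : IsBddSeq a) : IsBddSeq (star a) :=
  ha.comp_of_norm_le fun x => (norm_star x).le

end IsBddSeq

namespace SeqAlg

variable {A : Type*} [NormedRing A] [StarRing A] [NormedAlgebra ℂ A]
  {Ainf : Type*} [Ring Ainf] [StarRing Ainf] [Algebra ℂ Ainf] (S : SeqAlg A Ainf)

theorem q_zero : S.q 0 = 0 := by
  simpa using S.q_smul 0 0 (isBddSeq_const (0 : A))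

theorem q_sum {ι : Type*} (s : Finset ι) {a : ι → ℕ → A} (ha : ∀ i ∈ s, IsBddSeq (a i)) :
    S.q (∑ i ∈ s, a i) = ∑ i ∈ s, S.q (a i) := by
  classical
  induction s using Finset.induction_on with
  | empty => simpa using S.q_zero
  | insert i s hi ih =>
    have ha' : ∀ j ∈ s, IsBddSeq (a j) := fun j hj => ha j (Finset.mem_insert_of_mem hj)
    rw [Finset.sum_insert hi, Finset.sum_insert hi,
      S.q_add _ _ (ha i (s.mem_insert_self i)) (IsBddSeq.sum s ha'), ih ha']

def IsInduced (f : A → A) (F : Ainf → Ainf) : Prop :=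
  ∀ a : ℕ → A, IsBddSeq a → F (S.q a) = S.q (f ∘ a)

variable {S} {f f' : A → A} {F F' : Ainf → Ainf}

theorem IsInduced.unique (hF : S.IsInduced f F) (hF' : S.IsInduced f F') : F = F' := by
  funext z
  obtain ⟨a, ha, rfl⟩ := S.surj z
  rw [hF a ha, hF' a ha]

theorem IsInduced.comp (hF : S.IsInduced f F) (hF' : S.IsInduced f' F')
    (hf' : ∀ x, ‖f' x‖ ≤ ‖x‖) : S.IsInduced (f ∘ f') (F ∘ F') := fun a ha => by
  rw [Function.comp_apply, hF' a ha, hF _ (ha.comp_of_norm_le hf')]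
  rfl

theorem IsInduced.map_incl (hF : S.IsInduced f F) (x : A) : F (S.incl x) = S.incl (f x) :=
  hF _ (isBddSeq_const x)

theorem IsInduced.map_mul (hF : S.IsInduced f F) (hf : ∀ x, ‖f x‖ ≤ ‖x‖)
    (hmul : ∀ x y, f (x * y) = f x * f y) (z w : Ainf) : F (z * w) = F z * F w := by
  obtain ⟨a, ha, rfl⟩ := S.surj z
  obtain ⟨b, hb, rfl⟩ := S.surj w
  rw [← S.q_mul a b ha hb, hF _ (ha.mul hb), hF a ha, hF b hb,
    ← S.q_mul _ _ (ha.comp_of_norm_le hf) (hb.comp_of_norm_le hf)]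
  exact congrArg S.q (funext fun n => hmul (a n) (b n))

theorem IsInduced.map_star [NormedStarGroup A] (hF : S.IsInduced f F)
    (hf : ∀ x, ‖f x‖ ≤ ‖x‖) (hstar : ∀ x, f (star x) = star (f x)) (z : Ainf) :
    F (star z) = star (F z) := by
  obtain ⟨a, ha, rfl⟩ := S.surj z
  rw [← S.q_star a ha, hF _ ha.star, hF a ha, ← S.q_star _ (ha.comp_of_norm_le hf)]
  exact congrArg S.q (funext fun n => hstar (a n))

theorem isInduced_smul_sum {ι : Type*} [Fintype ι] {f : ι → A → A} {F : ι → Ainf → Ainf}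
    (hF : ∀ i, S.IsInduced (f i) (F i)) (hf : ∀ i x, ‖f i x‖ ≤ ‖x‖) (c : ℂ) :
    S.IsInduced (fun x => c • ∑ i, f i x) (fun z => c • ∑ i, F i z) := fun a ha => by
  have hfa : ∀ i ∈ Finset.univ, IsBddSeq (f i ∘ a) := fun i _ => ha.comp_of_norm_le (hf i)
  have hcomp : ((fun x => c • ∑ i, f i x) ∘ a) = c • ∑ i, f i ∘ a := by
    funext n
    simp only [Function.comp_apply, Pi.smul_apply, Finset.sum_apply]
  rw [hcomp, S.q_smul _ _ (IsBddSeq.sum _ hfa), S.q_sum _ hfa]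
  simp only [hF _ a ha]

end SeqAlg

section GroupAction

variable {A : Type*} [CStarAlgebra A] {G : Type*} [Monoid G] [MulSemiringAction G A]

def smulNonUnitalStarAlgHom (hstar : ∀ (g : G) (x : A), g • (star x) = star (g • x))
    (hsmul : ∀ (g : G) (c : ℂ) (x : A), g • (c • x) = c • (g • x)) (g : G) :
    A →⋆ₙₐ[ℂ] A where
  toFun x := g • x
  map_smul' c x := hsmul g c x
  map_zero' := smul_zero g
  map_add' := smul_add g
  map_mul' := smul_mul' g
  map_star' := hstar g

theorem norm_smul_le_of_star (hstar : ∀ (g : G) (x : A), g • (star x) = star (g • x))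
    (hsmul : ∀ (g : G) (c : ℂ) (x : A), g • (c • x) = c • (g • x)) (g : G) (x : A) :
    ‖g • x‖ ≤ ‖x‖ :=
  NonUnitalStarAlgHom.norm_apply_le (smulNonUnitalStarAlgHom hstar hsmul g) x

end GroupAction

/-- let `α` be an action of a finite group `G` on a unital C*-algebra `A`
and `E(x) = (1/|G|) ∑_g α_g x` the canonical conditional expectation onto the fixed
point algebra. Then `α` has the Rohlin property (a partition of unity `{e_g} ⊆ A_∞`
of projections with `(α_g)_∞(e_h) = e_{gh}`) if and only if there is a projection
`e ∈ A_∞` with `E^∞(e) = (1/|G|)·1`. -/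
theorem rohlin_iff_projection_with_expectation
    {A : Type*} [NormedRing A] [StarRing A] [CStarRing A] [NormedAlgebra ℂ A]
    [CompleteSpace A] [StarModule ℂ A]
    {G : Type*} [Group G] [Fintype G] [MulSemiringAction G A]
    (hstar : ∀ (g : G) (x : A), g • (star x) = star (g • x))
    (hsmul : ∀ (g : G) (c : ℂ) (x : A), g • (c • x) = c • (g • x))
    {Ainf : Type*} [Ring Ainf] [StarRing Ainf] [Algebra ℂ Ainf] (S : SeqAlg A Ainf)
    (αinf : G → Ainf → Ainf)
    (hαinf : ∀ (g : G) (a : ℕ → A), IsBddSeq a →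
      αinf g (S.q a) = S.q fun n => g • a n)
    (E : A → A) (hE : ∀ x : A, E x = ((Fintype.card G : ℂ))⁻¹ • ∑ g : G, g • x)
    (Einf : Ainf → Ainf)
    (hEinf : ∀ a : ℕ → A, IsBddSeq a → Einf (S.q a) = S.q fun n => E (a n)) :
    (∃ e : G → Ainf,
        (∀ g, e g * e g = e g) ∧ (∀ g, star (e g) = e g) ∧
        (∑ g : G, e g = 1) ∧
        (∀ (g : G) (x : A), Commute (e g) (S.incl x)) ∧
        (∀ g h : G, αinf g (e h) = e (g * h)))
      ↔ (∃ e : Ainf, e * e = e ∧ star e = e ∧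
          (∀ x : A, Commute e (S.incl x)) ∧
          Einf e = ((Fintype.card G : ℂ))⁻¹ • 1) := by
  let _ : CStarAlgebra A := { }
  have hα : ∀ g : G, S.IsInduced (g • ·) (αinf g) := hαinf
  have hnorm : ∀ (g : G) (x : A), ‖g • x‖ ≤ ‖x‖ := norm_smul_le_of_star hstar hsmul
  have hEinf_eq : Einf = fun z => ((Fintype.card G : ℂ))⁻¹ • ∑ g : G, αinf g z := by
    refine SeqAlg.IsInduced.unique (f := E) hEinf ?_
    rw [show E = fun x => ((Fintype.card G : ℂ))⁻¹ • ∑ g : G, g • x from funext hE]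
    exact SeqAlg.isInduced_smul_sum hα hnorm _
  constructor
  · rintro ⟨e, he_idem, he_star, he_sum, he_comm, he_equiv⟩
    refine ⟨e 1, he_idem 1, he_star 1, he_comm 1, ?_⟩
    simp only [hEinf_eq, he_equiv, mul_one, he_sum]
  · rintro ⟨e, he_idem, he_star, he_comm, he_exp⟩
    refine ⟨fun g => αinf g e, fun g => ?_, fun g => ?_, ?_, fun g x => ?_, fun g h => ?_⟩
    · rw [← (hα g).map_mul (hnorm g) (smul_mul' g), he_idem]
    · rw [← (hα g).map_star (hnorm g) (hstar g), he_star]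
    · have hc : ((Fintype.card G : ℂ))⁻¹ ≠ 0 := by simp
      rw [hEinf_eq] at he_exp
      exact smul_right_injective Ainf hc he_exp
    · have hx : S.incl x = αinf g (S.incl (g⁻¹ • x)) := by
        rw [(hα g).map_incl, smul_inv_smul]
      rw [hx, commute_iff_eq, ← (hα g).map_mul (hnorm g) (smul_mul' g),
        ← (hα g).map_mul (hnorm g) (smul_mul' g), (he_comm _).eq]
    · have hgh : ((g • ·) ∘ (h • ·) : A → A) = ((g * h) • ·) :=
        funext fun x => (mul_smul g h x).symm
      have hcomp := ((hα g).comp (hα h) (hnorm h)).unique (by rw [hgh]; exact hα (g * h))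
      exact congrFun hcomp e
end

section
/- Let E : A → P be an approximately representable conditional expectation of finite index on an inclusion of unital C*-algebras. Then the relative commutant is trivial in the sense that P' ∩ A ⊆ P: every element of A commuting with all of P lies in P, and indeed equals its own image under E. -/
/-- if a finite-index conditional expectation `E : A → P` is
approximately representable (there is a projection `e ∈ P_∞` with `e x e = E(x) e`
for all `x ∈ A`, and `y ↦ ye` injective on `P`), then `P' ∩ A ⊆ P`: every element
of `A` commuting with all of `P` lies in `P` and equals its own image under `E`. -/
theorem approx_representable_relative_commutant
    {A : Type*} [NormedRing A] [StarRing A] [CStarRing A] [NormedAlgebra ℂ A]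
    [CompleteSpace A] [StarModule ℂ A] [PartialOrder A] [StarOrderedRing A]
    (P : StarSubalgebra ℂ A) (E : A → A) (hE : IsCondExp P E)
    {n : ℕ} (u v : Fin n → A) (hq : IsQuasiBasis E u v)
    {Ainf : Type*} [Ring Ainf] [StarRing Ainf] [Algebra ℂ Ainf] (S : SeqAlg A Ainf)
    -- the projection `e ∈ P_∞` approximately representing `E`
    (e : Ainf) (he_rep : ∃ a : ℕ → A, IsBddSeq a ∧ (∀ n, a n ∈ P) ∧ S.q a = e)
    (he_idem : e * e = e) (he_star : star e = e)
    (he_comm : ∀ p ∈ P, Commute e (S.incl p))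
    (he_repE : ∀ x : A, e * S.incl x * e = S.incl (E x) * e)
    (he_inj : ∀ y ∈ P, S.incl y * e = 0 → y = 0) :
    ∀ x : A, (∀ p ∈ P, Commute x p) → x ∈ P ∧ E x = x := by
  intro x hx
  obtain ⟨a, hab, haP, hae⟩ := he_rep
  have hbdd : ∀ z : A, IsBddSeq (fun _ : ℕ => z) := fun z => ⟨‖z‖, fun _ => le_rfl⟩
  have hincl_mul : ∀ z w : A, S.incl (z * w) = S.incl z * S.incl w := by
    intro z w
    have h := S.q_mul (fun _ => z) (fun _ => w) (hbdd z) (hbdd w)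
    simpa [SeqAlg.incl, Pi.mul_def] using h
  have hincl_sub : ∀ z w : A, S.incl (z - w) = S.incl z - S.incl w := by
    intro z w
    have hfun : (fun _ : ℕ => z - w) = (fun _ : ℕ => z) + ((-1 : ℂ) • fun _ : ℕ => w) := by
      funext m; simp [sub_eq_add_neg]
    have hbw : IsBddSeq ((-1 : ℂ) • fun _ : ℕ => w) := by
      have : ((-1 : ℂ) • fun _ : ℕ => w) = fun _ : ℕ => -w := by funext m; simp
      rw [this]; exact hbdd _
    have h1 := S.q_add (fun _ => z) ((-1 : ℂ) • fun _ : ℕ => w) (hbdd z) hbw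
    have h2 := S.q_smul (-1) (fun _ : ℕ => w) (hbdd w)
    show S.q _ = _
    rw [hfun, h1, h2]
    simp [SeqAlg.incl, sub_eq_add_neg]
  -- x commutes with e
  have hxe : S.incl x * e = e * S.incl x := by
    rw [← hae]
    show S.q _ * S.q _ = S.q _ * S.q _
    rw [← S.q_mul _ _ (hbdd x) hab, ← S.q_mul _ _ hab (hbdd x)]
    congr 1
    funext m
    exact (hx (a m) (haP m)).eq
  have hye : S.incl (x - E x) * e = 0 := by
    have h1 : S.incl x * e = S.incl (E x) * e := by
      calc S.incl x * e = S.incl x * (e * e) := by rw [he_idem]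
        _ = e * S.incl x * e := by rw [← mul_assoc, hxe]
        _ = S.incl (E x) * e := he_repE x
    rw [hincl_sub, sub_mul, h1, sub_self]
  have hEi : ∀ i, E (v i * (x - E x)) = 0 := by
    intro i
    apply he_inj _ (hE.mem _)
    rw [← he_repE, hincl_mul]
    simp only [mul_assoc]
    rw [hye, mul_zero, mul_zero]
  have hy0 : x - E x = 0 := by
    calc x - E x = ∑ i, u i * E (v i * (x - E x)) := (hq (x - E x)).1
      _ = 0 := by simp [hEi]
  have hxE : x = E x := sub_eq_zero.mp hy0
  exact ⟨hxE ▸ hE.mem x, hxE.symm⟩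
end
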